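/- For every real number x₀ and every real number x, log(1 + exp(x)) ≤ log(1 + exp(x₀)) + σ(x₀)·(x − x₀) + (1/8)·(x − x₀)², where σ(t) = 1/(1 + exp(−t)) is the logistic function. Consequently, for any s ∈ ℝ, the logistic log-likelihood term s·x − log(1 + exp(x)) is bounded below by its quadratic surrogate s·x₀ − log(1 + exp(x₀)) + (s − σ(x₀))·(x − x₀) − (1/8)·(x − x₀)². -/

import Mathlib

/-- The logistic (sigmoid) function σ(t) = 1/(1+exp(−t)). -/
noncomputable def logistic (t : ℝ) : ℝ := 1 / (1 + Real.exp (-t))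

/-!
The function `t ↦ t² / 8 - log (1 + exp t)` is convex, because the second derivative of
`log (1 + exp t)` is `σ t (1 - σ t) ≤ 1 / 4`. Its tangent line at `x₀` therefore lies below
it, which is the first inequality; the second is the first rearranged.
-/

open Real Set

theorem ConvexOn.add_mul_sub_le_of_hasDerivAt {S : Set ℝ} {f : ℝ → ℝ} {f' x y : ℝ}
    (hfc : ConvexOn ℝ S f) (hx : x ∈ S) (hy : y ∈ S) (hf : HasDerivAt f f' x) :
    f x + f' * (y - x) ≤ f y := by
  rcases lt_trichotomy x y with hxy | rfl | hyx
  · have h := hfc.le_slope_of_hasDerivAt hx hy hxy hf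
    rw [slope_def_field, le_div_iff₀ (sub_pos.mpr hxy)] at h
    linarith
  · simp
  · have h := hfc.slope_le_of_hasDerivAt hy hx hyx hf
    rw [slope_def_field, div_le_iff₀ (sub_pos.mpr hyx)] at h
    linarith

namespace Real

theorem sigmoid_eq_exp_div (x : ℝ) : sigmoid x = exp x / (1 + exp x) := by
  rw [sigmoid_def, exp_neg]
  field_simp
  ring

theorem hasDerivAt_log_one_add_exp (x : ℝ) :
    HasDerivAt (fun t => log (1 + exp t)) (sigmoid x) x := by
  rw [sigmoid_eq_exp_div]
  exact ((hasDerivAt_exp x).const_add 1).log (by positivity)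

theorem sigmoid_mul_one_sub_le (x : ℝ) : sigmoid x * (1 - sigmoid x) ≤ 1 / 4 := by
  nlinarith [sq_nonneg (sigmoid x - 1 / 2)]

theorem hasDerivAt_sq_div_eight_sub_log_one_add_exp (x : ℝ) :
    HasDerivAt (fun t => t ^ 2 / 8 - log (1 + exp t)) (x / 4 - sigmoid x) x :=
  (((hasDerivAt_pow 2 x).div_const 8).sub (hasDerivAt_log_one_add_exp x)).congr_deriv
    (by norm_num; ring)

theorem convexOn_sq_div_eight_sub_log_one_add_exp :
    ConvexOn ℝ univ (fun t => t ^ 2 / 8 - log (1 + exp t)) := by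
  have hφ := hasDerivAt_sq_div_eight_sub_log_one_add_exp
  have hψ : ∀ x, HasDerivAt (fun t => t / 4 - sigmoid t) (1 / 4 - sigmoid x * (1 - sigmoid x)) x :=
    fun x => ((hasDerivAt_id x).div_const 4).sub (hasDerivAt_sigmoid x)
  have hψ_mono : Monotone (fun t => t / 4 - sigmoid t) :=
    monotone_of_deriv_nonneg (fun x => (hψ x).differentiableAt) fun x => by
      rw [(hψ x).deriv]
      linarith [sigmoid_mul_one_sub_le x]
  refine Monotone.convexOn_univ_of_deriv (fun x => (hφ x).differentiableAt) ?_
  rwa [funext fun x => (hφ x).deriv]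

theorem log_one_add_exp_le (x₀ x : ℝ) :
    log (1 + exp x) ≤ log (1 + exp x₀) + sigmoid x₀ * (x - x₀) + (x - x₀) ^ 2 / 8 := by
  have h := convexOn_sq_div_eight_sub_log_one_add_exp.add_mul_sub_le_of_hasDerivAt
    (mem_univ x₀) (mem_univ x) (hasDerivAt_sq_div_eight_sub_log_one_add_exp x₀)
  linarith

end Real

theorem logistic_eq_sigmoid : logistic = sigmoid := by
  ext t
  rw [logistic, sigmoid_def, one_div]

/-- Quadratic majorization of `log(1+exp x)` at `x₀` (curvature 1/4), and the
resulting quadratic minorization of the logistic log-likelihood `s·x − log(1+exp x)`. -/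
theorem logistic_quadratic_bound (x₀ x : ℝ) :
    Real.log (1 + Real.exp x) ≤
      Real.log (1 + Real.exp x₀) + logistic x₀ * (x - x₀) + (1 / 8) * (x - x₀) ^ 2 ∧
    ∀ s : ℝ,
      s * x₀ - Real.log (1 + Real.exp x₀) + (s - logistic x₀) * (x - x₀)
          - (1 / 8) * (x - x₀) ^ 2
        ≤ s * x - Real.log (1 + Real.exp x) := by
  have h := log_one_add_exp_le x₀ x
  rw [logistic_eq_sigmoid]
  exact ⟨by linarith, fun s => by linarith⟩
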